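/- arXiv:2512.09963 — 3 statements merged into one kernel-verified Lean document; each statement's English description precedes it below -/
import Mathlib

section
/- Speculative decoding is distributionally correct: given distributions p, q on a finite alphabet with q(s) > 0 everywhere, if a token s is sampled from q and accepted with probability min(1, p(s)/q(s)), and upon rejection a replacement token is sampled from the residual distribution proportional to max(0, p(s) - q(s)), then the resulting output token is distributed exactly according to p. -/
/-- Distributional correctness of speculative decoding: the output token is the
drafted token `s ∼ q` if accepted (with probability `min(1, p(s)/q(s))`), and
otherwise a sample from the normalized residual `r(s) ∝ max(0, p(s) - q(s))`.
The resulting output distribution equals `p` exactly: for every token `s`,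
`q(s)·min(1,p(s)/q(s)) + P(reject)·r(s) = p(s)`, where the rejection probability
is `∑_{s'} q(s')(1 - min(1, p(s')/q(s')))`. -/
theorem speculative_decoding_correct
    {σ : Type*} [Fintype σ]
    (p q : σ → ℝ)
    (hp0 : ∀ s, 0 ≤ p s) (hp1 : ∑ s, p s = 1)
    (hq0 : ∀ s, 0 < q s) (hq1 : ∑ s, q s = 1)
    (hpq : p ≠ q) :
    ∀ s : σ,
      q s * min 1 (p s / q s) +
        (∑ s', q s' * (1 - min 1 (p s' / q s'))) *
          (max 0 (p s - q s) / ∑ s', max 0 (p s' - q s')) = p s := by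
  -- key pointwise identities
  have hmin : ∀ s, q s * min 1 (p s / q s) = min (q s) (p s) := by
    intro s
    rw [mul_min_of_nonneg _ _ (hq0 s).le, mul_one, mul_div_cancel₀ _ (hq0 s).ne']
  have hmax : ∀ s, max 0 (p s - q s) = p s - min (q s) (p s) := by
    intro s
    rcases le_total (p s) (q s) with h | h
    · rw [min_eq_right h, max_eq_left (by linarith), sub_self]
    · rw [min_eq_left h, max_eq_right (by linarith)]
  have hrej : ∀ s, q s * (1 - min 1 (p s / q s)) = q s - min (q s) (p s) := by
    intro s
    rw [mul_sub, mul_one, hmin]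
  set M : ℝ := ∑ s', min (q s') (p s') with hM
  have hsumrej : (∑ s', q s' * (1 - min 1 (p s' / q s'))) = 1 - M := by
    simp only [hrej, Finset.sum_sub_distrib, hq1, hM]
  have hsummax : (∑ s', max 0 (p s' - q s')) = 1 - M := by
    simp only [hmax, Finset.sum_sub_distrib, hp1, hM]
  have hMne : 1 - M ≠ 0 := by
    intro h
    apply hpq
    have hall : ∀ s, q s - min (q s) (p s) = 0 := by
      have hnn : ∀ s ∈ Finset.univ, 0 ≤ q s - min (q s) (p s) := by
        intro s _; simp [min_le_left]
      have hsum : ∑ s, (q s - min (q s) (p s)) = 0 := by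
        rw [Finset.sum_sub_distrib, hq1, ← hM]; linarith
      intro s
      exact (Finset.sum_eq_zero_iff_of_nonneg hnn).mp hsum s (Finset.mem_univ s)
    have hall' : ∀ s, p s - min (q s) (p s) = 0 := by
      have hnn : ∀ s ∈ Finset.univ, 0 ≤ p s - min (q s) (p s) := by
        intro s _; simp [min_le_right]
      have hsum : ∑ s, (p s - min (q s) (p s)) = 0 := by
        rw [Finset.sum_sub_distrib, hp1, ← hM]; linarith
      intro s
      exact (Finset.sum_eq_zero_iff_of_nonneg hnn).mp hsum s (Finset.mem_univ s)
    funext s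
    have := hall s; have := hall' s; linarith
  intro s
  rw [hmin, hsumrej, hsummax, hmax, mul_div_cancel₀ _ hMne]
  ring
end

section
/- Exponential decay of distance to a convex set under the fluid dynamics: let X ⊂ ℝ^N be a fixed nonempty closed convex set and suppose x : [0,∞) → ℝ^N is absolutely continuous and satisfies x'(t) = v(t) - x(t) for almost every t, where v(t) ∈ X. Then dist(x(t), X) ≤ dist(x(0), X) · e^{-t} for all t ≥ 0. -/
/-!
Variation of constants turns the integral equation into `e^t x(t) = x(0) + ∫₀ᵗ e^s v(s) ds`:
the function `e^s x(s) - ∫₀ˢ e^r v(r) dr` is absolutely continuous with derivative zero almost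
everywhere. Hence
`x(t) = e^{-t} x(0) + (1 - e^{-t}) v̄`, where `v̄` is the `e^s`-weighted average of `v` over
`[0, t]`, which lies in the closed convex set `X`. Replacing `x(0)` by any point `q ∈ X` in this
convex combination gives a point of `X` at distance `e^{-t} ‖x(0) - q‖` from `x(t)`.
-/

open MeasureTheory Set Filter

theorem AbsolutelyContinuousOnInterval.of_dist_le {X Y : Type*} [PseudoMetricSpace X]
    [PseudoMetricSpace Y] {f : ℝ → X} {g : ℝ → Y} {a b : ℝ}
    (hg : AbsolutelyContinuousOnInterval g a b)
    (hfg : ∀ p ∈ uIcc a b, ∀ q ∈ uIcc a b, dist (f p) (f q) ≤ dist (g p) (g q)) :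
    AbsolutelyContinuousOnInterval f a b := by
  refine squeeze_zero' (.of_forall fun _ => Finset.sum_nonneg fun _ _ => dist_nonneg) ?_ hg
  filter_upwards [inf_le_right (a := AbsolutelyContinuousOnInterval.totalLengthFilter)
    (mem_principal_self _)] with E hE
  exact Finset.sum_le_sum fun i hi => hfg _ (hE.1 i hi).1 _ (hE.1 i hi).2

variable {E : Type*} [NormedAddCommGroup E] [NormedSpace ℝ E]

theorem IntervalIntegrable.absolutelyContinuousOnInterval_primitive {u : ℝ → E} {a b c : ℝ}
    (hu : IntervalIntegrable u volume a b) (hc : c ∈ uIcc a b) :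
    AbsolutelyContinuousOnInterval (fun s => ∫ r in c..s, u r) a b := by
  refine (hu.norm.absolutelyContinuousOnInterval_intervalIntegral hc).of_dist_le
    fun p hp q hq => ?_
  have hint : ∀ s ∈ uIcc a b, IntervalIntegrable u volume c s := fun s hs =>
    hu.mono_set (uIcc_subset_uIcc hc hs)
  rw [dist_eq_norm, Real.dist_eq,
    intervalIntegral.integral_interval_sub_left (hint p hp) (hint q hq),
    intervalIntegral.integral_interval_sub_left (hint p hp).norm (hint q hq).norm]
  exact intervalIntegral.norm_integral_le_abs_integral_norm

theorem exp_smul_eq_add_integral_of_eq_add_integral [CompleteSpace E] {x v : ℝ → E} {t : ℝ}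
    (hu : IntervalIntegrable (fun s => v s - x s) volume 0 t)
    (hv : IntervalIntegrable v volume 0 t)
    (hx : ∀ s ∈ uIcc 0 t, x s = x 0 + ∫ r in (0 : ℝ)..s, (v r - x r)) :
    Real.exp t • x t = x 0 + ∫ s in (0 : ℝ)..t, Real.exp s • v s := by
  have hev : IntervalIntegrable (fun s => Real.exp s • v s) volume 0 t :=
    hv.continuousOn_smul Real.continuous_exp.continuousOn
  set G : ℝ → E := fun s =>
    Real.exp s • (x 0 + ∫ r in (0 : ℝ)..s, (v r - x r)) - ∫ r in (0 : ℝ)..s, Real.exp r • v r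
  have hG : AbsolutelyContinuousOnInterval G 0 t :=
    (Real.contDiff_exp.contDiffOn.absolutelyContinuousOnInterval.fun_smul
      (contDiffOn_const.absolutelyContinuousOnInterval.add
        (hu.absolutelyContinuousOnInterval_primitive left_mem_uIcc))).sub
      (hev.absolutelyContinuousOnInterval_primitive left_mem_uIcc)
  have hG' : ∀ᵐ s, s ∈ uIcc 0 t → HasDerivAt G 0 s := by
    filter_upwards [hu.ae_hasDerivAt_integral, hev.ae_hasDerivAt_integral]
      with s hus hevs hs
    have := ((Real.hasDerivAt_exp s).smul ((hus hs 0 left_mem_uIcc).const_add (x 0))).sub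
      (hevs hs 0 left_mem_uIcc)
    refine this.congr_deriv ?_
    rw [← hx s hs, smul_sub, sub_add_cancel, sub_self]
  obtain ⟨C, hC⟩ := hG.const_of_ae_hasDerivAt_zero hG'
  have hGt : G t = G 0 := (hC t right_mem_uIcc).trans (hC 0 left_mem_uIcc).symm
  simp only [G, intervalIntegral.integral_same, add_zero, Real.exp_zero, one_smul, sub_zero,
    ← hx t right_mem_uIcc] at hGt
  rw [← hGt, sub_add_cancel]

theorem Convex.inv_integral_smul_integral_smul_mem [CompleteSpace E] {X : Set E}
    (hX : Convex ℝ X) (hXc : IsClosed X) {w : ℝ → ℝ} (hw : Continuous w) (hw0 : ∀ s, 0 < w s)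
    {f : ℝ → E} {a b : ℝ} (hab : a < b) (hf : IntervalIntegrable f volume a b)
    (hfX : ∀ s ∈ Ioc a b, f s ∈ X) :
    (∫ s in a..b, w s)⁻¹ • ∫ s in a..b, w s • f s ∈ X := by
  set ρ : ℝ → NNReal := fun s => (w s).toNNReal
  have hρ : Measurable ρ := hw.measurable.real_toNNReal
  have hρw : ∀ s, (ρ s : ℝ) = w s := fun s => Real.coe_toNNReal _ (hw0 s).le
  set μ := volume.withDensity fun s => (ρ s : ENNReal)
  have hμ : μ.restrict (Ioc a b) =
      (volume.restrict (Ioc a b)).withDensity fun s => (ρ s : ENNReal) :=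
    restrict_withDensity measurableSet_Ioc _
  have hμab : μ (Ioc a b) = ENNReal.ofReal (∫ s in a..b, w s) := by
    rw [withDensity_apply _ measurableSet_Ioc, intervalIntegral.integral_of_le hab.le,
      ofReal_integral_eq_lintegral_ofReal
      hw.integrableOn_Ioc (.of_forall fun s => (hw0 s).le)]
    simp only [ρ, ENNReal.ofReal]
  have hpos : 0 < ∫ s in a..b, w s :=
    intervalIntegral.intervalIntegral_pos_of_pos_on (hw.intervalIntegrable a b)
      (fun s _ => hw0 s) hab
  have havg := hX.set_average_mem hXc (μ := μ) (t := Ioc a b) (f := f)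
    (by rw [hμab]; exact (ENNReal.ofReal_pos.2 hpos).ne')
    (by rw [hμab]; exact ENNReal.ofReal_ne_top)
    (by
      rw [hμ]
      filter_upwards [(withDensity_absolutelyContinuous _ _).ae_le
        (ae_restrict_mem measurableSet_Ioc)] using hfX)
    (by
      rw [IntegrableOn, hμ, integrable_withDensity_iff_integrable_smul hρ]
      simp only [NNReal.smul_def, hρw]
      exact (hf.continuousOn_smul hw.continuousOn).1)
  rw [setAverage_eq, measureReal_def, hμab, ENNReal.toReal_ofReal hpos.le,
    setIntegral_withDensity_eq_setIntegral_smul hρ _ measurableSet_Ioc,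
    ← intervalIntegral.integral_of_le hab.le] at havg
  simpa only [NNReal.smul_def, hρw] using havg

theorem Convex.infDist_smul_add_smul_le {X : Set E} (hX : Convex ℝ X) {p : E} (hp : p ∈ X)
    (y : E) {θ : ℝ} (hθ0 : 0 ≤ θ) (hθ1 : θ ≤ 1) :
    Metric.infDist (θ • y + (1 - θ) • p) X ≤ θ * Metric.infDist y X := by
  have : Nonempty X := ⟨⟨p, hp⟩⟩
  rw [Metric.infDist_eq_iInf (x := y), Real.mul_iInf_of_nonneg hθ0]
  refine le_ciInf fun q => (Metric.infDist_le_dist_of_mem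
    (hX q.2 hp hθ0 (sub_nonneg.2 hθ1) (add_sub_cancel _ _))).trans_eq ?_
  rw [dist_add_right, dist_smul₀, Real.norm_of_nonneg hθ0]

theorem fluid_dist_exponential_decay_general
    (N : ℕ) (X : Set (EuclideanSpace ℝ (Fin N)))
    (hXcl : IsClosed X) (hXconv : Convex ℝ X)
    (x v : ℝ → EuclideanSpace ℝ (Fin N))
    (hv : ∀ t : ℝ, 0 ≤ t → v t ∈ X)
    (hint : ∀ t : ℝ, 0 ≤ t →
      IntervalIntegrable (fun s => v s - x s) MeasureTheory.volume 0 t)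
    (hAC : ∀ t : ℝ, 0 ≤ t → x t = x 0 + ∫ s in (0 : ℝ)..t, (v s - x s)) :
    ∀ t : ℝ, 0 ≤ t →
      Metric.infDist (x t) X ≤ Metric.infDist (x 0) X * Real.exp (-t) := by
  intro t ht
  rcases ht.eq_or_lt with rfl | htpos
  · simp
  have hx : ∀ s ∈ uIcc 0 t, x s = x 0 + ∫ r in (0 : ℝ)..s, (v r - x r) := fun s hs =>
    hAC s (uIcc_of_le ht ▸ hs).1
  have hxc : ContinuousOn x (uIcc 0 t) :=
    (continuousOn_const.add ((hint t ht).absolutelyContinuousOnInterval_primitive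
      left_mem_uIcc).continuousOn).congr hx
  have hvi : IntervalIntegrable v volume 0 t := by
    simpa using (hint t ht).add hxc.intervalIntegrable
  have hp := hXconv.inv_integral_smul_integral_smul_mem hXcl Real.continuous_exp Real.exp_pos
    htpos hvi fun s hs => hv s hs.1.le
  have hxt : x t = Real.exp (-t) • x 0 + (1 - Real.exp (-t)) •
      (∫ s in (0 : ℝ)..t, Real.exp s)⁻¹ • ∫ s in (0 : ℝ)..t, Real.exp s • v s := by
    have hexp : (1 - Real.exp (-t)) * (Real.exp t - 1)⁻¹ = Real.exp (-t) := by
      rw [Real.exp_neg]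
      field_simp [sub_ne_zero.2 (Real.one_lt_exp_iff.2 htpos).ne']
    rw [integral_exp, Real.exp_zero, smul_smul, hexp, ← smul_add,
      ← exp_smul_eq_add_integral_of_eq_add_integral (hint t ht) hvi hx, smul_smul,
      ← Real.exp_add, neg_add_cancel, Real.exp_zero, one_smul]
  rw [hxt, mul_comm]
  exact hXconv.infDist_smul_add_smul_le hp _ (Real.exp_pos _).le
    (Real.exp_le_one_iff.2 (neg_nonpos.2 ht))

/-- Exponential decay of the distance to a convex set under the fluid dynamics:
if `x` is absolutely continuous (written in integral form
`x(t) = x(0) + ∫₀ᵗ (v(s) - x(s)) ds`, so that `x'(t) = v(t) - x(t)` a.e.)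
with `v(t) ∈ X` for a nonempty closed convex set `X`, then
`dist(x(t), X) ≤ dist(x(0), X) e^{-t}` for all `t ≥ 0`. -/
theorem fluid_dist_exponential_decay
    (N : ℕ) (X : Set (EuclideanSpace ℝ (Fin N)))
    (hXne : X.Nonempty) (hXcl : IsClosed X) (hXconv : Convex ℝ X)
    (x v : ℝ → EuclideanSpace ℝ (Fin N))
    (hv : ∀ t : ℝ, 0 ≤ t → v t ∈ X)
    (hint : ∀ t : ℝ, 0 ≤ t →
      IntervalIntegrable (fun s => v s - x s) MeasureTheory.volume 0 t)
    (hAC : ∀ t : ℝ, 0 ≤ t → x t = x 0 + ∫ s in (0 : ℝ)..t, (v s - x s)) :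
    ∀ t : ℝ, 0 ≤ t →
      Metric.infDist (x t) X ≤ Metric.infDist (x 0) X * Real.exp (-t) :=
  fluid_dist_exponential_decay_general N X hXcl hXconv x v hv hint hAC
end

section
/- Lyapunov increase of utility under gradient scheduling fluid dynamics: let X ⊂ ℝ_{>0}^N be compact convex, U(x) = ∑_i log x_i, and x* = argmax_{x ∈ X} U(x). Suppose x : [0,∞) → ℝ_{>0}^N satisfies x'(t) = v(t) - x(t) with v(t) ∈ argmax_{v ∈ X} ∑_i v_i / x_i(t) for a.e. t, and x(t) ∈ X for all t. Then for a.e. t with x(t) ≠ x*, (d/dt) U(x(t)) = ∑_i (v_i(t) - x_i(t))/x_i(t) > 0; that is, U(x(t)) is strictly increasing away from x*. -/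
open MeasureTheory

/-!
Along the fluid path, `d/dt ∑ᵢ log xᵢ = ∑ᵢ vᵢ / xᵢ - N`. Since `x*` is a competitor in the
maximization defining `v`, `∑ᵢ vᵢ / xᵢ ≥ ∑ᵢ x*ᵢ / xᵢ`, and the tangent-line bound
`log r ≤ r - 1` (strict for `r ≠ 1`) applied to `r = x*ᵢ / xᵢ` gives
`∑ᵢ x*ᵢ / xᵢ - N > ∑ᵢ log x*ᵢ - ∑ᵢ log xᵢ ≥ 0` as soon as `x ≠ x*`.
-/

section LogUtility

variable {ι : Type*} [Fintype ι]

theorem hasDerivAt_sum_log {x : ℝ → ι → ℝ} {x' : ι → ℝ} {t : ℝ}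
    (hx : ∀ i, HasDerivAt (fun s => x s i) (x' i) t) (hx0 : ∀ i, x t i ≠ 0) :
    HasDerivAt (fun s => ∑ i, Real.log (x s i)) (∑ i, x' i / x t i) t :=
  HasDerivAt.fun_sum fun i _ => (hx i).log (hx0 i)

theorem sum_sub_div_self {a b : ι → ℝ} (ha : ∀ i, a i ≠ 0) :
    ∑ i, (b i - a i) / a i = ∑ i, b i / a i - Fintype.card ι := by
  simp only [sub_div, div_self (ha _), Finset.sum_sub_distrib, Finset.sum_const,
    Finset.card_univ, nsmul_eq_mul, mul_one]

theorem sum_log_div_lt_sum_div_sub_one {a b : ι → ℝ} (ha : ∀ i, 0 < a i) (hb : ∀ i, 0 < b i)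
    (hab : a ≠ b) :
    ∑ i, Real.log (b i / a i) < ∑ i, (b i / a i - 1) := by
  obtain ⟨j, hj⟩ := Function.ne_iff.mp hab
  refine Finset.sum_lt_sum (fun i _ => Real.log_le_sub_one_of_pos (div_pos (hb i) (ha i)))
    ⟨j, Finset.mem_univ j, Real.log_lt_sub_one_of_pos (div_pos (hb j) (ha j)) ?_⟩
  rw [Ne, div_eq_one_iff_eq (ha j).ne']
  exact fun h => hj h.symm

theorem card_lt_sum_div_of_sum_log_le {a b : ι → ℝ} (ha : ∀ i, 0 < a i) (hb : ∀ i, 0 < b i)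
    (hab : a ≠ b) (hlog : ∑ i, Real.log (a i) ≤ ∑ i, Real.log (b i)) :
    (Fintype.card ι : ℝ) < ∑ i, b i / a i := by
  have hsum_log : ∑ i, Real.log (b i / a i) = ∑ i, Real.log (b i) - ∑ i, Real.log (a i) := by
    rw [← Finset.sum_sub_distrib]
    exact Finset.sum_congr rfl fun i _ => Real.log_div (hb i).ne' (ha i).ne'
  have hlt := sum_log_div_lt_sum_div_sub_one ha hb hab
  rw [hsum_log, Finset.sum_sub_distrib, Finset.sum_const, Finset.card_univ,
    nsmul_eq_mul, mul_one] at hlt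
  linarith

theorem sum_sub_div_pos_of_ne_maximizer {X : Set (ι → ℝ)} (hXpos : X ⊆ {y | ∀ i, 0 < y i})
    {xstar y v : ι → ℝ} (hxstar : xstar ∈ X)
    (hxstarMax : ∀ z ∈ X, ∑ i, Real.log (z i) ≤ ∑ i, Real.log (xstar i))
    (hy : y ∈ X) (hvMax : ∀ w ∈ X, ∑ i, w i / y i ≤ ∑ i, v i / y i) (hne : y ≠ xstar) :
    0 < ∑ i, (v i - y i) / y i := by
  have hypos : ∀ i, 0 < y i := hXpos hy
  have hcard := card_lt_sum_div_of_sum_log_le hypos (hXpos hxstar) hne (hxstarMax y hy)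
  rw [sum_sub_div_self fun i => (hypos i).ne']
  linarith [hvMax xstar hxstar]

end LogUtility

theorem fluid_log_utility_lyapunov_general
    (N : ℕ) (X : Set (Fin N → ℝ))
    (hXpos : X ⊆ {y | ∀ i, 0 < y i})
    (xstar : Fin N → ℝ) (hxstar : xstar ∈ X)
    (hxstarMax : ∀ y ∈ X, ∑ i, Real.log (y i) ≤ ∑ i, Real.log (xstar i))
    (x v : ℝ → (Fin N → ℝ))
    (hxX : ∀ t : ℝ, 0 ≤ t → x t ∈ X)
    (hvX : ∀ᵐ t ∂(volume.restrict (Set.Ici (0 : ℝ))),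
      v t ∈ X ∧ ∀ w ∈ X, ∑ i, w i / x t i ≤ ∑ i, v t i / x t i)
    (hderiv : ∀ᵐ t ∂(volume.restrict (Set.Ici (0 : ℝ))),
      ∀ i, HasDerivAt (fun s => x s i) (v t i - x t i) t) :
    ∀ᵐ t ∂(volume.restrict (Set.Ici (0 : ℝ))),
      HasDerivAt (fun s => ∑ i, Real.log (x s i))
        (∑ i, (v t i - x t i) / x t i) t ∧
      (x t ≠ xstar → 0 < ∑ i, (v t i - x t i) / x t i) := by
  filter_upwards [hvX, hderiv, ae_restrict_mem measurableSet_Ici] with t ⟨_, hvMax⟩ hxt ht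
  have hxtX : x t ∈ X := hxX t ht
  exact ⟨hasDerivAt_sum_log hxt fun i => (hXpos hxtX i).ne',
    sum_sub_div_pos_of_ne_maximizer hXpos hxstar hxstarMax hxtX hvMax⟩

/-- Lyapunov increase of the log-utility `U(x) = ∑ᵢ log xᵢ` under the gradient
scheduling fluid dynamics: if `x(t) ∈ X` solves `x'(t) = v(t) - x(t)` a.e. with
drift `v(t)` maximizing `∑ᵢ vᵢ / xᵢ(t)` over the compact convex set
`X ⊂ ℝ_{>0}^N`, and `x*` is the maximizer of `U` over `X`, then for a.e. `t`,
`(d/dt) U(x(t)) = ∑ᵢ (vᵢ(t) - xᵢ(t))/xᵢ(t)`, which is strictly positive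
whenever `x(t) ≠ x*`. -/
theorem fluid_log_utility_lyapunov
    (N : ℕ) (X : Set (Fin N → ℝ))
    (hXpos : X ⊆ {y | ∀ i, 0 < y i})
    (hXcomp : IsCompact X) (hXconv : Convex ℝ X)
    (xstar : Fin N → ℝ) (hxstar : xstar ∈ X)
    (hxstarMax : ∀ y ∈ X, ∑ i, Real.log (y i) ≤ ∑ i, Real.log (xstar i))
    (x v : ℝ → (Fin N → ℝ))
    (hxX : ∀ t : ℝ, 0 ≤ t → x t ∈ X)
    (hvX : ∀ᵐ t ∂(volume.restrict (Set.Ici (0 : ℝ))),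
      v t ∈ X ∧ ∀ w ∈ X, ∑ i, w i / x t i ≤ ∑ i, v t i / x t i)
    (hderiv : ∀ᵐ t ∂(volume.restrict (Set.Ici (0 : ℝ))),
      ∀ i, HasDerivAt (fun s => x s i) (v t i - x t i) t) :
    ∀ᵐ t ∂(volume.restrict (Set.Ici (0 : ℝ))),
      HasDerivAt (fun s => ∑ i, Real.log (x s i))
        (∑ i, (v t i - x t i) / x t i) t ∧
      (x t ≠ xstar → 0 < ∑ i, (v t i - x t i) / x t i) :=
  fluid_log_utility_lyapunov_general N X hXpos xstar hxstar hxstarMax x v hxX hvX hderiv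
end
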